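/- The function g(x) := π²/(4 sin²(πx/2)) - 1/x² on (0,1] extends continuously to [0,1] with g(0) = π²/12, and g is nondecreasing on [0,1] with maximum value g(1) = π²/4 - 1. -/

import Mathlib

open Real Set

/-- The function `g(x) = π²/(4 sin²(πx/2)) - 1/x²`, with its limiting value at `x = 0`. -/
noncomputable def gfun (x : ℝ) : ℝ :=
  if x = 0 then π^2 / 12
  else π^2 / (4 * Real.sin (π * x / 2)^2) - 1 / x^2

open Filter Topology

/-- `sin v - v cos v ≥ 0` on `[0, π]`. -/
lemma aux1 : ∀ v ∈ Icc (0:ℝ) π, 0 ≤ Real.sin v - v * Real.cos v := by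
  have hmono : MonotoneOn (fun v : ℝ => Real.sin v - v * Real.cos v) (Icc 0 π) := by
    apply monotoneOn_of_hasDerivWithinAt_nonneg (f' := fun v => v * Real.sin v)
      (convex_Icc 0 π)
    · fun_prop
    · intro v hv
      have h : HasDerivAt (fun v : ℝ => Real.sin v - v * Real.cos v)
          (Real.cos v - (1 * Real.cos v + v * (-Real.sin v))) v :=
        (Real.hasDerivAt_sin v).sub ((hasDerivAt_id v).mul (Real.hasDerivAt_cos v))
      have h' : HasDerivAt (fun v : ℝ => Real.sin v - v * Real.cos v) (v * Real.sin v) v := by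
        convert h using 1; ring
      exact h'.hasDerivWithinAt
    · intro v hv
      rw [interior_Icc] at hv
      exact mul_nonneg hv.1.le (Real.sin_nonneg_of_nonneg_of_le_pi hv.1.le hv.2.le)
  intro v hv
  have := hmono (left_mem_Icc.2 (by positivity)) hv hv.1
  simpa using this

/-- `2 - 2cos v - v sin v ≥ 0` on `[0, π]`. -/
lemma aux2 : ∀ v ∈ Icc (0:ℝ) π, 0 ≤ 2 - 2 * Real.cos v - v * Real.sin v := by
  have hmono : MonotoneOn (fun v : ℝ => 2 - 2 * Real.cos v - v * Real.sin v) (Icc 0 π) := by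
    apply monotoneOn_of_hasDerivWithinAt_nonneg
      (f' := fun v => Real.sin v - v * Real.cos v) (convex_Icc 0 π)
    · fun_prop
    · intro v hv
      have h : HasDerivAt (fun v : ℝ => 2 - 2 * Real.cos v - v * Real.sin v)
          (0 - 2 * (-Real.sin v) - (1 * Real.sin v + v * Real.cos v)) v :=
        ((hasDerivAt_const v (2:ℝ)).sub ((Real.hasDerivAt_cos v).const_mul 2)).sub
          ((hasDerivAt_id v).mul (Real.hasDerivAt_sin v))
      have h' : HasDerivAt (fun v : ℝ => 2 - 2 * Real.cos v - v * Real.sin v)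
          (Real.sin v - v * Real.cos v) v := by
        convert h using 1; ring
      exact h'.hasDerivWithinAt
    · intro v hv
      rw [interior_Icc] at hv
      exact aux1 v (Ioo_subset_Icc_self hv)
  intro v hv
  have := hmono (left_mem_Icc.2 (by positivity)) hv hv.1
  simpa using this

/-- `v cos v + 2v - 3 sin v ≥ 0` on `[0, π]`. -/
lemma aux3 : ∀ v ∈ Icc (0:ℝ) π, 0 ≤ v * Real.cos v + 2 * v - 3 * Real.sin v := by
  have hmono : MonotoneOn (fun v : ℝ => v * Real.cos v + 2 * v - 3 * Real.sin v) (Icc 0 π) := by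
    apply monotoneOn_of_hasDerivWithinAt_nonneg
      (f' := fun v => 2 - 2 * Real.cos v - v * Real.sin v) (convex_Icc 0 π)
    · fun_prop
    · intro v hv
      have h : HasDerivAt (fun v : ℝ => v * Real.cos v + 2 * v - 3 * Real.sin v)
          ((1 * Real.cos v + v * (-Real.sin v)) + 2 * 1 - 3 * Real.cos v) v :=
        (((hasDerivAt_id v).mul (Real.hasDerivAt_cos v)).add
          ((hasDerivAt_id v).const_mul 2)).sub ((Real.hasDerivAt_sin v).const_mul 3)
      have h' : HasDerivAt (fun v : ℝ => v * Real.cos v + 2 * v - 3 * Real.sin v)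
          (2 - 2 * Real.cos v - v * Real.sin v) v := by
        convert h using 1; ring
      exact h'.hasDerivWithinAt
    · intro v hv
      rw [interior_Icc] at hv
      exact aux2 v (Ioo_subset_Icc_self hv)
  intro v hv
  have := hmono (left_mem_Icc.2 (by positivity)) hv hv.1
  simpa using this

/-- The key mixed inequality `3 sin u cos u ≤ 3u cos²u + u sin²u` on `(0, π/2)`. -/
lemma aux4 : ∀ u ∈ Ioo (0:ℝ) (π/2),
    3 * Real.sin u * Real.cos u ≤ 3 * u * Real.cos u ^ 2 + u * Real.sin u ^ 2 := by
  intro u hu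
  have h := aux3 (2*u) ⟨by linarith [hu.1], by linarith [hu.2, Real.pi_pos]⟩
  rw [Real.cos_two_mul, Real.sin_two_mul] at h
  have h2 : 2 * u * (Real.sin u ^ 2 + Real.cos u ^ 2) = 2 * u := by
    rw [Real.sin_sq_add_cos_sq]; ring
  nlinarith [h2]

/-- `u ↦ u³ cos u / sin³ u` is antitone on `(0, π/2)`. -/
lemma aux5 : AntitoneOn (fun u : ℝ => u^3 * Real.cos u / Real.sin u ^ 3) (Ioo 0 (π/2)) := by
  apply antitoneOn_of_hasDerivWithinAt_nonpos
    (f' := fun u => ((3 * u^2 * Real.cos u + u^3 * (-Real.sin u)) * Real.sin u ^ 3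
        - u^3 * Real.cos u * (3 * Real.sin u ^ 2 * Real.cos u)) / (Real.sin u ^ 3)^2)
    (convex_Ioo 0 (π/2))
  · intro u hu
    have hs : Real.sin u ≠ 0 :=
      (Real.sin_pos_of_pos_of_lt_pi hu.1 (by linarith [hu.2, Real.pi_pos])).ne'
    exact ContinuousWithinAt.div
      (Continuous.continuousWithinAt (by continuity))
      (Continuous.continuousWithinAt (by continuity)) (by positivity)
  · intro u hu
    rw [interior_Ioo] at hu
    have hs : Real.sin u ≠ 0 :=
      (Real.sin_pos_of_pos_of_lt_pi hu.1 (by linarith [hu.2, Real.pi_pos])).ne'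
    have hN : HasDerivAt (fun u : ℝ => u^3 * Real.cos u)
        ((3 * u^2) * Real.cos u + u^3 * (-Real.sin u)) u := by
      have := (hasDerivAt_pow 3 u).mul (Real.hasDerivAt_cos u)
      exact this.congr_deriv (by norm_num)
    have hD : HasDerivAt (fun u : ℝ => Real.sin u ^ 3)
        (3 * Real.sin u ^ 2 * Real.cos u) u := by
      have := (Real.hasDerivAt_sin u).pow 3
      exact this.congr_deriv (by norm_num)
    have := hN.div hD (by positivity)
    refine HasDerivAt.hasDerivWithinAt ?_
    exact this.congr_deriv (by ring)
  · intro u hu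
    rw [interior_Ioo] at hu
    have hsp : 0 < Real.sin u :=
      Real.sin_pos_of_pos_of_lt_pi hu.1 (by linarith [hu.2, Real.pi_pos])
    apply div_nonpos_of_nonpos_of_nonneg _ (by positivity)
    have h4 := aux4 u hu
    have hE : 0 ≤ 3 * u * Real.cos u ^ 2 + u * Real.sin u ^ 2 - 3 * Real.sin u * Real.cos u := by
      linarith
    have hkey := mul_nonneg (mul_nonneg (sq_nonneg (Real.sin u)) (sq_nonneg u)) hE
    nlinarith [hkey]

/-- `sin t / t → 1` as `t → 0⁺`. -/
lemma aux6 : Tendsto (fun t : ℝ => Real.sin t / t) (𝓝[>] 0) (𝓝 1) := by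
  have h : HasDerivAt Real.sin 1 0 := by
    simpa using Real.hasDerivAt_sin 0
  have h2 := hasDerivAt_iff_tendsto_slope.1 h
  have h3 : Tendsto (slope Real.sin 0) (𝓝[>] 0) (𝓝 1) :=
    h2.mono_left (nhdsWithin_mono 0 (fun x hx => ne_of_gt hx))
  refine h3.congr' ?_
  filter_upwards [self_mem_nhdsWithin] with t ht
  simp [slope_def_field]

/-- `t³ cos t / sin³ t → 1` as `t → 0⁺`. -/
lemma aux7 : Tendsto (fun t : ℝ => t^3 * Real.cos t / Real.sin t ^ 3) (𝓝[>] 0) (𝓝 1) := by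
  have hc : Tendsto (fun t : ℝ => Real.cos t) (𝓝[>] 0) (𝓝 1) := by
    have h := (Real.continuous_cos.tendsto 0).mono_left
      (nhdsWithin_le_nhds : 𝓝[>] (0:ℝ) ≤ 𝓝 0)
    simpa using h
  have hpow : Tendsto (fun t : ℝ => ((Real.sin t / t)⁻¹)^3) (𝓝[>] 0) (𝓝 1) := by
    have := (aux6.inv₀ one_ne_zero).pow 3
    simpa using this
  have := hc.mul hpow
  rw [one_mul] at this
  refine this.congr' ?_
  have hev : ∀ᶠ t in 𝓝[>] (0:ℝ), t ∈ Ioo (0:ℝ) (π/2) := by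
    filter_upwards [self_mem_nhdsWithin,
      Ioo_mem_nhdsGT_of_mem (by constructor <;> [rfl; positivity] : (0:ℝ) ∈ Ico 0 (π/2))]
      with t ht ht2
    exact ht2
  filter_upwards [hev] with t ht
  have hs : 0 < Real.sin t := Real.sin_pos_of_pos_of_lt_pi ht.1 (by linarith [ht.2, Real.pi_pos])
  have ht0 : (0:ℝ) < t := ht.1
  field_simp

/-- The Adamović–Mitrinović inequality `u³ cos u ≤ sin³ u` on `(0, π/2)`. -/
lemma aux8 : ∀ u ∈ Ioo (0:ℝ) (π/2), u^3 * Real.cos u ≤ Real.sin u ^ 3 := by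
  intro u hu
  have hs : 0 < Real.sin u := Real.sin_pos_of_pos_of_lt_pi hu.1 (by linarith [hu.2, Real.pi_pos])
  have hle : u^3 * Real.cos u / Real.sin u ^ 3 ≤ 1 := by
    refine ge_of_tendsto aux7 ?_
    filter_upwards [Ioo_mem_nhdsGT_of_mem (by constructor <;> [rfl; exact hu.1] : (0:ℝ) ∈ Ico 0 u)]
      with t ht
    exact aux5 ⟨ht.1, lt_trans ht.2 hu.2⟩ hu ht.2.le
  calc u^3 * Real.cos u = (u^3 * Real.cos u / Real.sin u ^ 3) * Real.sin u ^ 3 := by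
        field_simp
    _ ≤ 1 * Real.sin u ^ 3 := by
        apply mul_le_mul_of_nonneg_right hle (by positivity)
    _ = Real.sin u ^ 3 := one_mul _

/-- `(t - sin t)/t³ → 1/6` as `t → 0⁺`. -/
lemma aux9 : Tendsto (fun t : ℝ => (t - Real.sin t)/t^3) (𝓝[>] 0) (𝓝 (1/6)) := by
  have hb : ∀ᶠ t in 𝓝[>] (0:ℝ), |(t - Real.sin t)/t^3 - 1/6| ≤ 5*t/96 := by
    filter_upwards [Ioc_mem_nhdsGT_of_mem (by constructor <;> norm_num : (0:ℝ) ∈ Ico 0 1)]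
      with t ht
    have h1 : |t| ≤ 1 := by rw [abs_of_pos ht.1]; exact ht.2
    have h2 := Real.sin_bound h1
    have ht3 : (0:ℝ) < t^3 := pow_pos ht.1 3
    have heq : (t - Real.sin t)/t^3 - 1/6 = -((Real.sin t - (t - t^3/6))/t^3) := by
      field_simp [ht.1.ne']; ring
    rw [heq, abs_neg, abs_div, abs_of_pos ht3, div_le_iff₀ ht3]
    calc |Real.sin t - (t - t^3/6)| ≤ |t|^4 * (5/96) := le_trans h2 (by rw [abs_of_pos ht.1]; have := pow_nonneg ht.1.le 4; nlinarith [ht.2])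
      _ = t^4 * (5/96) := by rw [abs_of_pos ht.1]
      _ ≤ 5*t/96 * t^3 := by ring_nf; rfl
  have hlo : Tendsto (fun t : ℝ => 1/6 - 5*t/96) (𝓝[>] 0) (𝓝 (1/6)) := by
    have : Tendsto (fun t : ℝ => 1/6 - 5*t/96) (𝓝 0) (𝓝 (1/6 - 5*0/96)) := by
      exact (tendsto_const_nhds.sub ((tendsto_id.const_mul 5).div_const 96))
    have he : (1/6 - 5*0/96 : ℝ) = 1/6 := by norm_num
    rw [he] at this
    exact this.mono_left nhdsWithin_le_nhds
  have hhi : Tendsto (fun t : ℝ => 1/6 + 5*t/96) (𝓝[>] 0) (𝓝 (1/6)) := by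
    have : Tendsto (fun t : ℝ => 1/6 + 5*t/96) (𝓝 0) (𝓝 (1/6 + 5*0/96)) := by
      exact (tendsto_const_nhds.add ((tendsto_id.const_mul 5).div_const 96))
    have he : (1/6 + 5*0/96 : ℝ) = 1/6 := by norm_num
    rw [he] at this
    exact this.mono_left nhdsWithin_le_nhds
  refine tendsto_of_tendsto_of_tendsto_of_le_of_le' hlo hhi ?_ ?_
  · filter_upwards [hb] with t ht
    have := abs_le.1 ht
    linarith [this.1]
  · filter_upwards [hb] with t ht
    have := abs_le.1 ht
    linarith [this.2]

lemma hmap : Tendsto (fun x : ℝ => π*x/2) (𝓝[>] 0) (𝓝[>] 0) := by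
  apply tendsto_nhdsWithin_of_tendsto_nhds_of_eventually_within
  · have : Tendsto (fun x : ℝ => π*x/2) (𝓝 0) (𝓝 (π*0/2)) :=
      ((tendsto_id.const_mul π).div_const 2)
    simpa using this.mono_left nhdsWithin_le_nhds
  · filter_upwards [self_mem_nhdsWithin] with x hx
    have : (0:ℝ) < x := hx
    have : (0:ℝ) < π*x/2 := by positivity
    exact this

lemma hq : Tendsto (fun x : ℝ => Real.sin (π*x/2)/x) (𝓝[>] 0) (𝓝 (π/2)) := by
  have h := (aux6.comp hmap).mul_const (π/2)
  rw [one_mul] at h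
  refine h.congr' ?_
  filter_upwards [self_mem_nhdsWithin] with x hx
  have hx0 : (0:ℝ) < x := hx
  have hπ : (0:ℝ) < π := Real.pi_pos
  simp only [Function.comp]
  field_simp

/-- The main limit: `gfun → π²/12` as `x → 0⁺`. -/
lemma aux10 : Tendsto gfun (𝓝[>] 0) (𝓝 (π^2/12)) := by
  have hA : Tendsto (fun x : ℝ => (π*x/2 - Real.sin (π*x/2))/x^3) (𝓝[>] 0) (𝓝 (π^3/48)) := by
    have h := (aux9.comp hmap).mul_const ((π/2)^3)
    have hval : (1/6 : ℝ) * (π/2)^3 = π^3/48 := by ring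
    rw [hval] at h
    refine h.congr' ?_
    filter_upwards [self_mem_nhdsWithin] with x hx
    have hx0 : (0:ℝ) < x := hx
    have hπ : (0:ℝ) < π := Real.pi_pos
    simp only [Function.comp]
    field_simp
  have hB : Tendsto (fun x : ℝ => (π/2 + Real.sin (π*x/2)/x) * ((Real.sin (π*x/2)/x)⁻¹)^2)
      (𝓝[>] 0) (𝓝 ((π/2 + π/2) * ((π/2)⁻¹)^2)) :=
    (tendsto_const_nhds.add hq).mul ((hq.inv₀ (by positivity)).pow 2)
  have h := hA.mul hB
  have hval : π^3/48 * ((π/2 + π/2) * ((π/2)⁻¹)^2) = π^2/12 := by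
    have hπ : (0:ℝ) < π := Real.pi_pos
    field_simp
    ring
  rw [hval] at h
  refine h.congr' ?_
  filter_upwards [Ioo_mem_nhdsGT_of_mem (by constructor <;> norm_num : (0:ℝ) ∈ Ico 0 1)]
    with x hx
  have hx0 : (0:ℝ) < x := hx.1
  have hπ : (0:ℝ) < π := Real.pi_pos
  have hu : π*x/2 < π := by nlinarith [hx.2]
  have hs : 0 < Real.sin (π*x/2) := Real.sin_pos_of_pos_of_lt_pi (by positivity) hu
  rw [gfun, if_neg hx0.ne']
  field_simp
  ring

lemma gcont : ContinuousOn gfun (Icc 0 1) := by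
  intro x hx
  rcases eq_or_lt_of_le hx.1 with h0 | h0
  · -- x = 0
    rw [ContinuousWithinAt, ← h0]
    have hicc : Icc (0:ℝ) 1 = insert 0 (Ioc 0 1) := (Ioc_insert_left (by norm_num)).symm
    have hg0 : gfun 0 = π^2/12 := by rw [gfun, if_pos rfl]
    rw [hicc, nhdsWithin_insert, hg0]
    refine tendsto_sup.2 ⟨?_, ?_⟩
    · have := tendsto_pure_nhds gfun 0
      rwa [hg0] at this
    · exact aux10.mono_left (nhdsWithin_mono 0 Ioc_subset_Ioi_self)
  · -- 0 < x
    have hx1 : x ≤ 1 := hx.2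
    have hπ : (0:ℝ) < π := Real.pi_pos
    have hu2 : π*x/2 < π := by nlinarith
    have hs : 0 < Real.sin (π*x/2) := Real.sin_pos_of_pos_of_lt_pi (by positivity) hu2
    have hca : ContinuousAt (fun y : ℝ => π^2 / (4 * Real.sin (π * y / 2)^2) - 1 / y^2) x := by
      apply ContinuousAt.sub
      · exact continuousAt_const.div (by fun_prop) (by positivity)
      · exact continuousAt_const.div (by fun_prop) (by positivity)
    have hev : (fun y : ℝ => π^2 / (4 * Real.sin (π * y / 2)^2) - 1 / y^2) =ᶠ[𝓝 x] gfun := by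
      filter_upwards [eventually_ne_nhds h0.ne'] with y hy
      rw [gfun, if_neg hy]
    exact (hca.congr hev).continuousWithinAt

lemma gmono : MonotoneOn gfun (Icc 0 1) := by
  apply monotoneOn_of_hasDerivWithinAt_nonneg
    (f' := fun x => 2/x^3 - π^3 * Real.cos (π*x/2) / (4 * Real.sin (π*x/2)^3))
    (convex_Icc 0 1) gcont
  · intro x hx
    rw [interior_Icc] at hx
    have hx0 : (0:ℝ) < x := hx.1
    have hπ : (0:ℝ) < π := Real.pi_pos
    have hu2 : π*x/2 < π := by nlinarith [hx.2]
    have hs : 0 < Real.sin (π*x/2) := Real.sin_pos_of_pos_of_lt_pi (by positivity) hu2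
    have h1 : HasDerivAt (fun y : ℝ => π*y/2) (π/2) x := by
      simpa using ((hasDerivAt_id x).const_mul π).div_const 2
    have h2 : HasDerivAt (fun y : ℝ => Real.sin (π*y/2)) (Real.cos (π*x/2) * (π/2)) x :=
      by have := (Real.hasDerivAt_sin (π*x/2)).comp x h1; exact this
    have h3 := (h2.pow 2).const_mul (4:ℝ)
    have h4 := (hasDerivAt_const x (π^2)).div h3 (by positivity :
      (4:ℝ) * Real.sin (π*x/2)^2 ≠ 0)
    have h5 := (hasDerivAt_const x (1:ℝ)).div (hasDerivAt_pow 2 x) (by positivity : x^2 ≠ 0)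
    have h6 := h4.sub h5
    have hev : (fun y : ℝ => π^2 / (4 * Real.sin (π * y / 2)^2) - 1 / y^2) =ᶠ[𝓝 x] gfun := by
      filter_upwards [eventually_ne_nhds hx0.ne'] with y hy
      rw [gfun, if_neg hy]
    have h7 := h6.congr_of_eventuallyEq hev.symm
    have h8 : HasDerivAt gfun
        (2/x^3 - π^3 * Real.cos (π*x/2) / (4 * Real.sin (π*x/2)^3)) x := by
      refine h7.congr_deriv ?_
      push_cast
      simp only [Pi.pow_apply]
      field_simp
      ring
    exact h8.hasDerivWithinAt
  · intro x hx
    rw [interior_Icc] at hx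
    have hx0 : (0:ℝ) < x := hx.1
    have hπ : (0:ℝ) < π := Real.pi_pos
    have huIoo : π*x/2 ∈ Ioo 0 (π/2) := ⟨by positivity, by nlinarith [hx.2]⟩
    have hs : 0 < Real.sin (π*x/2) :=
      Real.sin_pos_of_pos_of_lt_pi huIoo.1 (by linarith [huIoo.2])
    have h8 := aux8 _ huIoo
    rw [sub_nonneg, div_le_div_iff₀ (by positivity) (pow_pos hx0 3)]
    calc π^3 * Real.cos (π*x/2) * x^3 = 8 * ((π*x/2)^3 * Real.cos (π*x/2)) := by ring
      _ ≤ 8 * Real.sin (π*x/2)^3 := by linarith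
      _ ≤ 2 * (4 * Real.sin (π*x/2)^3) := by ring_nf; rfl

theorem gfun_properties :
    ContinuousOn gfun (Icc 0 1) ∧
    gfun 0 = π^2 / 12 ∧
    MonotoneOn gfun (Icc 0 1) ∧
    gfun 1 = π^2 / 4 - 1 ∧
    ∀ x ∈ Icc (0:ℝ) 1, gfun x ≤ π^2 / 4 - 1 := by
  have hg1 : gfun 1 = π^2 / 4 - 1 := by
    rw [gfun, if_neg one_ne_zero, show π * 1 / 2 = π/2 by ring, Real.sin_pi_div_two]
    norm_num
  refine ⟨gcont, by rw [gfun, if_pos rfl], gmono, hg1, ?_⟩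
  intro x hx
  rw [← hg1]
  exact gmono hx (right_mem_Icc.2 (by norm_num)) hx.2
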